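/- Let G be a group, ω : G → ℝ a weight, and x, y, z ∈ G. Writing π(f)ξ = f * ξ for the left regular action on ℂ[G], J(ξ)(g) = conj(ξ(g⁻¹)), and (D_ω ξ)(g) = ω(g)ξ(g), the following two identities hold: [D_ω, π(δ_x)]( (J ∘ π(δ_y) ∘ J)(δ_z) ) = (ω(xzy⁻¹) − ω(zy⁻¹)) · δ_{xzy⁻¹}, and (J ∘ π(δ_y) ∘ J)( [D_ω, π(δ_x)](δ_z) ) = (ω(xz) − ω(z)) · δ_{xzy⁻¹}. Consequently the first order condition [[D_ω, π(δ_x)], J π(δ_y) J] = 0 for all x, y, z ∈ G holds if and only if ω(xzy⁻¹) − ω(zy⁻¹) = ω(xz) − ω(z) for all x, y, z ∈ G. -/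

import Mathlib

/-!
Everything is a coefficient computation. `J π(δ_y) J` is right translation,
`ξ ↦ ξ(· y)`, and `[D_ω, π(δ_x)]` sends `ξ` to `g ↦ (ω g − ω (x⁻¹ g)) ξ(x⁻¹ g)`. Applied to
`δ_z`, both composites give multiples of `δ_{xzy⁻¹}`, which yields the two identities; comparing
their coefficients gives the forward implication. For the converse, evaluate both sides of the
first order condition at `g` and apply the weight identity at `z = x⁻¹ g y`.
-/

/-- The involution on the group algebra `ℂ[G]`: `J(ξ)(g) = conj (ξ g⁻¹)`. -/
noncomputable def invol {G : Type*} [Group G] (f : MonoidAlgebra ℂ G) : MonoidAlgebra ℂ G :=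
  MonoidAlgebra.ofCoeff
    (Finsupp.mapRange (starRingEnd ℂ) (map_zero _) (Finsupp.equivMapDomain (Equiv.inv G) f.coeff))

/-- The Dirac operator of a weight `ω : G → ℝ`, acting on the group algebra by pointwise
multiplication: `(D_ω ξ)(g) = ω(g) ξ(g)`. -/
noncomputable def dirac {G : Type*} [Group G] (ω : G → ℝ) (ξ : MonoidAlgebra ℂ G) :
    MonoidAlgebra ℂ G :=
  MonoidAlgebra.ofCoeff (Finsupp.ofSupportFinite (fun y => (ω y : ℂ) * ξ.coeff y)
    (Set.Finite.subset (Finsupp.finite_support ξ.coeff) fun _ hy =>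
      Function.mem_support.mpr (right_ne_zero_of_mul (Function.mem_support.mp hy))))

section

open MonoidAlgebra ComplexConjugate

variable {G : Type*} [Group G]

lemma coeff_dirac (ω : G → ℝ) (ξ : MonoidAlgebra ℂ G) (g : G) :
    (dirac ω ξ).coeff g = ω g * ξ.coeff g := rfl

lemma coeff_invol (ξ : MonoidAlgebra ℂ G) (g : G) :
    (invol ξ).coeff g = conj (ξ.coeff g⁻¹) := rfl

lemma dirac_single (ω : G → ℝ) (g : G) (c : ℂ) :
    dirac ω (single g c) = single g (ω g * c) := by
  classical
  ext h
  rw [coeff_dirac, coeff_single, coeff_single, Finsupp.single_apply, Finsupp.single_apply]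
  split_ifs with hgh
  · rw [hgh]
  · rw [mul_zero]

lemma invol_single (g : G) (c : ℂ) : invol (single g c) = single g⁻¹ (conj c) := by
  classical
  ext h
  simp only [coeff_invol, coeff_single, Finsupp.single_apply, inv_eq_iff_eq_inv]
  split_ifs
  · rfl
  · exact map_zero _

lemma invol_single_mul_invol_single (y z : G) (c : ℂ) :
    invol (single y 1 * invol (single z c)) = single (z * y⁻¹) c := by
  rw [invol_single, single_mul_single, one_mul, invol_single, mul_inv_rev, inv_inv,
    Complex.conj_conj]

lemma dirac_commutator_single (ω : G → ℝ) (x z : G) (c : ℂ) :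
    dirac ω (single x 1 * single z c) - single x 1 * dirac ω (single z c) =
      single (x * z) (((ω (x * z) - ω z : ℝ) : ℂ) * c) := by
  rw [dirac_single, single_mul_single, single_mul_single, one_mul, one_mul, dirac_single,
    ← single_sub, Complex.ofReal_sub, sub_mul]

lemma coeff_invol_single_mul_invol (y : G) (ξ : MonoidAlgebra ℂ G) (g : G) :
    (invol (single y 1 * invol ξ)).coeff g = ξ.coeff (g * y) := by
  rw [coeff_invol, coeff_single_mul_apply, one_mul, coeff_invol, ← mul_inv_rev, inv_inv,
    Complex.conj_conj]

lemma coeff_dirac_commutator (ω : G → ℝ) (x : G) (ξ : MonoidAlgebra ℂ G) (g : G) :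
    (dirac ω (single x 1 * ξ) - single x 1 * dirac ω ξ).coeff g =
      ((ω g - ω (x⁻¹ * g) : ℝ) : ℂ) * ξ.coeff (x⁻¹ * g) := by
  rw [coeff_sub, Finsupp.sub_apply, coeff_dirac, coeff_single_mul_apply, coeff_single_mul_apply,
    coeff_dirac, one_mul, one_mul, Complex.ofReal_sub, sub_mul]

lemma dirac_commutator_invol_single_mul_invol_single (ω : G → ℝ) (x y z : G) (c : ℂ) :
    dirac ω (single x 1 * invol (single y 1 * invol (single z c))) -
        single x 1 * dirac ω (invol (single y 1 * invol (single z c))) =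
      single (x * z * y⁻¹) (((ω (x * z * y⁻¹) - ω (z * y⁻¹) : ℝ) : ℂ) * c) := by
  rw [invol_single_mul_invol_single, dirac_commutator_single, mul_assoc]

lemma invol_single_mul_invol_dirac_commutator_single (ω : G → ℝ) (x y z : G) (c : ℂ) :
    invol (single y 1 *
        invol (dirac ω (single x 1 * single z c) - single x 1 * dirac ω (single z c))) =
      single (x * z * y⁻¹) (((ω (x * z) - ω z : ℝ) : ℂ) * c) := by
  rw [dirac_commutator_single, invol_single_mul_invol_single]

end

open MonoidAlgebra in
/-- The two basic identities
`[D_ω, π(δ_x)] (J π(δ_y) J δ_z) = (ω(xzy⁻¹) − ω(zy⁻¹)) δ_{xzy⁻¹}` and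
`(J π(δ_y) J) ([D_ω, π(δ_x)] δ_z) = (ω(xz) − ω(z)) δ_{xzy⁻¹}`, and the consequence that the
first order condition `[[D_ω, π(δ_x)], J π(δ_y) J] = 0` holds if and only if
`ω(xzy⁻¹) − ω(zy⁻¹) = ω(xz) − ω(z)` for all `x, y, z`. -/
theorem stmt15 {G : Type*} [Group G] (ω : G → ℝ) :
    (∀ x y z : G,
      dirac ω (single x (1 : ℂ) * invol (single y (1 : ℂ) * invol (single z (1 : ℂ)))) -
          single x (1 : ℂ) * dirac ω (invol (single y (1 : ℂ) * invol (single z (1 : ℂ)))) =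
        single (x * z * y⁻¹) (((ω (x * z * y⁻¹) - ω (z * y⁻¹) : ℝ) : ℂ))) ∧
    (∀ x y z : G,
      invol (single y (1 : ℂ) *
          invol (dirac ω (single x (1 : ℂ) * single z (1 : ℂ)) -
            single x (1 : ℂ) * dirac ω (single z (1 : ℂ)))) =
        single (x * z * y⁻¹) (((ω (x * z) - ω z : ℝ) : ℂ))) ∧
    ((∀ (x y : G) (ξ : MonoidAlgebra ℂ G),
        dirac ω (single x (1 : ℂ) * invol (single y (1 : ℂ) * invol ξ)) -
            single x (1 : ℂ) * dirac ω (invol (single y (1 : ℂ) * invol ξ)) =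
          invol (single y (1 : ℂ) *
            invol (dirac ω (single x (1 : ℂ) * ξ) - single x (1 : ℂ) * dirac ω ξ))) ↔
      ∀ x y z : G, ω (x * z * y⁻¹) - ω (z * y⁻¹) = ω (x * z) - ω z) := by
  refine ⟨fun x y z => ?_, fun x y z => ?_, fun h x y z => ?_, fun h x y ξ => ?_⟩
  · simpa only [mul_one] using dirac_commutator_invol_single_mul_invol_single ω x y z 1
  · simpa only [mul_one] using invol_single_mul_invol_dirac_commutator_single ω x y z 1
  · have hsingle := (dirac_commutator_invol_single_mul_invol_single ω x y z 1).symm.trans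
      ((h x y (single z 1)).trans (invol_single_mul_invol_dirac_commutator_single ω x y z 1))
    simpa only [single_right_inj, mul_one, Complex.ofReal_inj] using hsingle
  · ext g
    rw [coeff_dirac_commutator, coeff_invol_single_mul_invol, coeff_invol_single_mul_invol,
      coeff_dirac_commutator, ← mul_assoc]
    have hω := h x y (x⁻¹ * g * y)
    rw [show x * (x⁻¹ * g * y) * y⁻¹ = g by group, show x⁻¹ * g * y * y⁻¹ = x⁻¹ * g by group,
      show x * (x⁻¹ * g * y) = g * y by group] at hω
    rw [hω]
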